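/- arXiv:2303.15455 — 3 statements merged into one kernel-verified Lean document; each statement's English description precedes it below -/
import Mathlib

section
/- Under the two-sided Mittag-Leffler bound, for 0 < t ≤ τ the solution u_α(·,t) = Σ_n (E_α(−n²t^α)/E_α(−n²τ^α)) ⟨g, φ_n⟩ φ_n of the time-fractional backward heat problem satisfies (C₁/C₂)(τ^α/(1+t^α)) ‖g‖ ≤ ‖u_α(·,t)‖ ≤ (C₂/C₁)((1+τ^α)/t^α) ‖g‖. -/
open scoped RealInnerProductSpace

/-- The (real-valued) Mittag-Leffler function `E_α(x) = ∑ x^k / Γ(αk+1)`. -/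
noncomputable def mittagLeffler (α x : ℝ) : ℝ :=
  ∑' k : ℕ, x ^ k / Real.Gamma (α * k + 1)

theorem aux_norm_bounds
    {H : Type*} [NormedAddCommGroup H] [InnerProductSpace ℝ H] [CompleteSpace H]
    (φ : HilbertBasis ℕ ℝ H) (r : ℕ → ℝ) (A B : ℝ)
    (hApos : 0 < A) (hBpos : 0 < B)
    (hrbd : ∀ n : ℕ, A ≤ r n ∧ r n ≤ B)
    (g u : H) (hu : u = ∑' n : ℕ, (r n * ⟪g, φ n⟫) • φ n) :
    A * ‖g‖ ≤ ‖u‖ ∧ ‖u‖ ≤ B * ‖g‖ := by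
  set c : ℕ → ℝ := fun n => ⟪g, φ n⟫ with hc
  have hcg : ∀ n, φ.repr g n = c n := fun n => by
    rw [φ.repr_apply_apply, real_inner_comm]
  have hcsum : Summable fun n => (c n) ^ 2 := by
    have hm2 : Memℓp (fun n => φ.repr g n) 2 := lp.memℓp (φ.repr g)
    have := hm2.summable (p := 2) (by norm_num)
    simp only [ENNReal.toReal_ofNat, Real.rpow_two, hcg, Real.norm_eq_abs, sq_abs] at this
    exact this
  set F : ℕ → ℝ := fun n => r n * c n with hF
  have hFsq : ∀ n, (F n) ^ 2 ≤ B ^ 2 * (c n) ^ 2 := by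
    intro n
    have h1 := (hrbd n).1
    have h2 := (hrbd n).2
    have h3 : (F n) ^ 2 = (r n) ^ 2 * (c n) ^ 2 := by rw [hF]; ring
    rw [h3]
    have : (r n) ^ 2 ≤ B ^ 2 := by nlinarith
    exact mul_le_mul_of_nonneg_right this (sq_nonneg _)
  have hFsq' : ∀ n, A ^ 2 * (c n) ^ 2 ≤ (F n) ^ 2 := by
    intro n
    have h1 := (hrbd n).1
    have h3 : (F n) ^ 2 = (r n) ^ 2 * (c n) ^ 2 := by rw [hF]; ring
    rw [h3]
    have : A ^ 2 ≤ (r n) ^ 2 := by nlinarith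
    exact mul_le_mul_of_nonneg_right this (sq_nonneg _)
  have hFsum : Summable fun n => (F n) ^ 2 :=
    Summable.of_nonneg_of_le (fun n => sq_nonneg _) hFsq (hcsum.mul_left (B ^ 2))
  have hFmem : Memℓp F 2 := by
    apply memℓp_gen
    simpa only [ENNReal.toReal_ofNat, Real.rpow_two, Real.norm_eq_abs, sq_abs] using hFsum
  set Flp : lp (fun _ : ℕ => ℝ) 2 := ⟨F, hFmem⟩ with hFlp
  have huF : u = φ.repr.symm Flp := by
    rw [hu]
    exact HasSum.tsum_eq (φ.hasSum_repr_symm Flp)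
  have hnormu : ‖u‖ = ‖Flp‖ := by rw [huF]; exact LinearIsometryEquiv.norm_map _ _
  have hnormg : ‖g‖ = ‖φ.repr g‖ := (LinearIsometryEquiv.norm_map _ _).symm
  have hFsqnorm : ‖Flp‖ ^ 2 = ∑' n, (F n) ^ 2 := by
    have := lp.norm_rpow_eq_tsum (p := 2) (by norm_num) Flp
    simpa only [ENNReal.toReal_ofNat, Real.rpow_two, Real.norm_eq_abs, sq_abs] using this
  have hgsqnorm : ‖φ.repr g‖ ^ 2 = ∑' n, (c n) ^ 2 := by
    have := lp.norm_rpow_eq_tsum (p := 2) (by norm_num) (φ.repr g)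
    simpa only [ENNReal.toReal_ofNat, Real.rpow_two, Real.norm_eq_abs, sq_abs, hcg] using this
  have hupper : ‖u‖ ^ 2 ≤ (B * ‖g‖) ^ 2 := by
    rw [hnormu, hFsqnorm]
    have h1 : ∑' n, (F n) ^ 2 ≤ ∑' n, B ^ 2 * (c n) ^ 2 :=
      Summable.tsum_le_tsum hFsq hFsum (hcsum.mul_left _)
    have h2 : ∑' n, B ^ 2 * (c n) ^ 2 = B ^ 2 * ‖g‖ ^ 2 := by
      rw [tsum_mul_left, hnormg, hgsqnorm]
    calc ∑' n, (F n) ^ 2 ≤ B ^ 2 * ‖g‖ ^ 2 := h2 ▸ h1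
      _ = (B * ‖g‖) ^ 2 := by ring
  have hlower : (A * ‖g‖) ^ 2 ≤ ‖u‖ ^ 2 := by
    rw [hnormu, hFsqnorm]
    have h1 : ∑' n, A ^ 2 * (c n) ^ 2 ≤ ∑' n, (F n) ^ 2 :=
      Summable.tsum_le_tsum hFsq' (hcsum.mul_left _) hFsum
    have h2 : ∑' n, A ^ 2 * (c n) ^ 2 = A ^ 2 * ‖g‖ ^ 2 := by
      rw [tsum_mul_left, hnormg, hgsqnorm]
    calc (A * ‖g‖) ^ 2 = A ^ 2 * ‖g‖ ^ 2 := by ring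
      _ ≤ ∑' n, (F n) ^ 2 := h2 ▸ h1
  constructor
  · have h := Real.sqrt_le_sqrt hlower
    rwa [Real.sqrt_sq (by positivity), Real.sqrt_sq (norm_nonneg u)] at h
  · have h := Real.sqrt_le_sqrt hupper
    rwa [Real.sqrt_sq (norm_nonneg u), Real.sqrt_sq (by positivity)] at h

/-- Under the two-sided Mittag-Leffler bound, for `0 < t ≤ τ` the solution
`u = ∑_n (E_α(−λ_n²t^α)/E_α(−λ_n²τ^α)) ⟨g, φ_n⟩ φ_n` (with `λ_n = n+1`, i.e. `n = 1, 2, …`)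
satisfies `(C₁/C₂)(τ^α/(1+t^α))‖g‖ ≤ ‖u‖ ≤ (C₂/C₁)((1+τ^α)/t^α)‖g‖`. -/
theorem solution_norm_bounds
    {H : Type*} [NormedAddCommGroup H] [InnerProductSpace ℝ H] [CompleteSpace H]
    (φ : HilbertBasis ℕ ℝ H)
    (α t τ C₁ C₂ : ℝ) (hα : 0 < α) (hα1 : α < 1)
    (ht : 0 < t) (htτ : t ≤ τ) (hC₁ : 0 < C₁) (hC₁₂ : C₁ ≤ C₂)
    (hbd : ∀ x : ℝ, 0 < x →
      C₁ / (Real.Gamma (1 - α) * (1 + x)) ≤ mittagLeffler α (-x) ∧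
      mittagLeffler α (-x) ≤ C₂ / (Real.Gamma (1 - α) * (1 + x)))
    (g u : H)
    (hu : u = ∑' n : ℕ,
      (mittagLeffler α (-((n + 1 : ℝ) ^ 2 * t ^ α)) /
        mittagLeffler α (-((n + 1 : ℝ) ^ 2 * τ ^ α)) * ⟪g, φ n⟫) • φ n) :
    (C₁ / C₂) * (τ ^ α / (1 + t ^ α)) * ‖g‖ ≤ ‖u‖ ∧
    ‖u‖ ≤ (C₂ / C₁) * ((1 + τ ^ α) / t ^ α) * ‖g‖ := by
  have hC₂ : 0 < C₂ := hC₁.trans_le hC₁₂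
  have hτ : 0 < τ := ht.trans_le htτ
  have hta : 0 < t ^ α := Real.rpow_pos_of_pos ht α
  have hτa : 0 < τ ^ α := Real.rpow_pos_of_pos hτ α
  have htτa : t ^ α ≤ τ ^ α := Real.rpow_le_rpow ht.le htτ hα.le
  have hG : 0 < Real.Gamma (1 - α) := Real.Gamma_pos_of_pos (by linarith)
  set A : ℝ := (C₁ / C₂) * (τ ^ α / (1 + t ^ α)) with hA
  set B : ℝ := (C₂ / C₁) * ((1 + τ ^ α) / t ^ α) with hB
  have hApos : 0 < A := by positivity
  have hBpos : 0 < B := by positivity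
  set r : ℕ → ℝ := fun n => mittagLeffler α (-((n + 1 : ℝ) ^ 2 * t ^ α)) /
      mittagLeffler α (-((n + 1 : ℝ) ^ 2 * τ ^ α)) with hr
  -- pointwise bounds on the ratio
  have hrbd : ∀ n : ℕ, A ≤ r n ∧ r n ≤ B := by
    intro n
    have hn1 : (1 : ℝ) ≤ ((n : ℝ) + 1) ^ 2 := by
      nlinarith [Nat.cast_nonneg (α := ℝ) n]
    set m : ℝ := ((n : ℝ) + 1) ^ 2 with hm
    have hxt : 0 < m * t ^ α := by positivity
    have hxτ : 0 < m * τ ^ α := by positivity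
    obtain ⟨hlt, hut⟩ := hbd _ hxt
    obtain ⟨hlτ, huτ⟩ := hbd _ hxτ
    have het : 0 < mittagLeffler α (-(m * t ^ α)) :=
      lt_of_lt_of_le (by positivity) hlt
    have heτ : 0 < mittagLeffler α (-(m * τ ^ α)) :=
      lt_of_lt_of_le (by positivity) hlτ
    constructor
    · have h1 : (C₁ / (Real.Gamma (1 - α) * (1 + m * t ^ α))) /
          (C₂ / (Real.Gamma (1 - α) * (1 + m * τ ^ α))) ≤ r n := by
        apply div_le_div₀ (le_of_lt het) hlt heτ huτ
      refine le_trans ?_ h1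
      have heq : (C₁ / (Real.Gamma (1 - α) * (1 + m * t ^ α))) /
          (C₂ / (Real.Gamma (1 - α) * (1 + m * τ ^ α))) =
          (C₁ * (1 + m * τ ^ α)) / (C₂ * (1 + m * t ^ α)) := by
        field_simp
      rw [heq, hA, div_mul_div_comm, div_le_div_iff₀ (by positivity) (by positivity)]
      have key : τ ^ α * (1 + m * t ^ α) ≤ (1 + m * τ ^ α) * (1 + t ^ α) := by
        have h1 : τ ^ α ≤ m * τ ^ α := le_mul_of_one_le_left hτa.le hn1
        nlinarith [h1, hta]
      calc C₁ * τ ^ α * (C₂ * (1 + m * t ^ α))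
          = (C₁ * C₂) * (τ ^ α * (1 + m * t ^ α)) := by ring
        _ ≤ (C₁ * C₂) * ((1 + m * τ ^ α) * (1 + t ^ α)) :=
            mul_le_mul_of_nonneg_left key (by positivity)
        _ = C₁ * (1 + m * τ ^ α) * (C₂ * (1 + t ^ α)) := by ring
    · have h2 : r n ≤ (C₂ / (Real.Gamma (1 - α) * (1 + m * t ^ α))) /
          (C₁ / (Real.Gamma (1 - α) * (1 + m * τ ^ α))) := by
        apply div_le_div₀ (by positivity) hut (by positivity) hlτ
      refine h2.trans ?_
      have heq : (C₂ / (Real.Gamma (1 - α) * (1 + m * t ^ α))) /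
          (C₁ / (Real.Gamma (1 - α) * (1 + m * τ ^ α))) =
          (C₂ * (1 + m * τ ^ α)) / (C₁ * (1 + m * t ^ α)) := by
        field_simp
      rw [heq, hB, div_mul_div_comm, div_le_div_iff₀ (by positivity) (by positivity)]
      have key : (1 + m * τ ^ α) * t ^ α ≤ (1 + τ ^ α) * (1 + m * t ^ α) := by
        have h1 : t ^ α ≤ m * t ^ α := le_mul_of_one_le_left hta.le hn1
        nlinarith [h1, hτa]
      calc C₂ * (1 + m * τ ^ α) * (C₁ * t ^ α)
          = (C₁ * C₂) * ((1 + m * τ ^ α) * t ^ α) := by ring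
        _ ≤ (C₁ * C₂) * ((1 + τ ^ α) * (1 + m * t ^ α)) :=
            mul_le_mul_of_nonneg_left key (by positivity)
        _ = C₂ * (1 + τ ^ α) * (C₁ * (1 + m * t ^ α)) := by ring
  exact aux_norm_bounds φ r A B hApos hBpos hrbd g u hu
end

section
/- With R_{t,α} as above and data g, g̃ ∈ L²[0,π] with ‖g − g̃‖ ≤ δ, the regularized solutions u_α(·,t) = R_{t,α} g and ũ_α(·,t) = R_{t,α} g̃ satisfy ‖u_α(·,t) − ũ_α(·,t)‖ ≤ (C₂/C₁)((1+τ^α)/t^α) δ for all 0 < t < τ. -/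
/-!
The regularised solution multiplies the `n`-th Fourier coefficient of the data by
`E_α(-n²t^α) / E_α(-n²τ^α)`. The two-sided bound `E_α(-x) ≍ 1 / (Γ(1-α)(1+x))` bounds this ratio
by `(C₂/C₁)(1 + n²τ^α)/(1 + n²t^α) ≤ (C₂/C₁)(1+τ^α)/t^α`, uniformly in `n ≥ 1`. A diagonal
operator on a Hilbert basis with uniformly bounded multipliers has norm at most the bound
(Parseval), and the solution map is linear in the data.
-/

open scoped RealInnerProductSpace InnerProductSpace

namespace HilbertBasis

variable {ι 𝕜 E : Type*} [RCLike 𝕜] [NormedAddCommGroup E] [InnerProductSpace 𝕜 E]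
  (b : HilbertBasis ι 𝕜 E) {m : ι → 𝕜} {M : ℝ}

theorem memℓp_mul_repr (hm : ∀ i, ‖m i‖ ≤ M) (v : E) :
    Memℓp (fun i => m i * b.repr v i) 2 :=
  ((lp.memℓp (b.repr v)).norm.const_mul M).mono fun i => by
    rw [norm_mul]
    exact mul_le_mul_of_nonneg_right (hm i) (norm_nonneg _)

theorem hasSum_mul_inner_smul (hm : ∀ i, ‖m i‖ ≤ M) (v : E) :
    HasSum (fun i => (m i * ⟪b i, v⟫_𝕜) • b i)
      (b.repr.symm ⟨_, b.memℓp_mul_repr hm v⟩) := by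
  simpa only [b.repr_apply_apply] using b.hasSum_repr_symm ⟨_, b.memℓp_mul_repr hm v⟩

theorem norm_tsum_mul_inner_smul_le (hm : ∀ i, ‖m i‖ ≤ M) (hM : 0 ≤ M) (v : E) :
    ‖∑' i, (m i * ⟪b i, v⟫_𝕜) • b i‖ ≤ M * ‖v‖ := by
  rw [(b.hasSum_mul_inner_smul hm v).tsum_eq, LinearIsometryEquiv.norm_map, ← b.repr.norm_map v]
  calc _ ≤ ‖M • b.repr v‖ := lp.norm_mono two_ne_zero fun i => by
        rw [lp.coeFn_smul, Pi.smul_apply, norm_smul, Real.norm_of_nonneg hM, norm_mul]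
        exact mul_le_mul_of_nonneg_right (hm i) (norm_nonneg _)
    _ = M * ‖b.repr v‖ := by rw [lp.norm_const_smul two_ne_zero, Real.norm_of_nonneg hM]

end HilbertBasis

theorem abs_div_le_of_two_sided_bound {f : ℝ → ℝ} {c C₁ C₂ : ℝ} (hc : 0 < c) (hC₁ : 0 < C₁)
    (hbd : ∀ x : ℝ, 0 < x → C₁ / (c * (1 + x)) ≤ f x ∧ f x ≤ C₂ / (c * (1 + x)))
    {x y : ℝ} (hx : 0 < x) (hy : 0 < y) :
    |f x / f y| ≤ C₂ / C₁ * ((1 + y) / (1 + x)) := by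
  obtain ⟨hfx, hfx'⟩ := hbd x hx
  obtain ⟨hfy, -⟩ := hbd y hy
  have hfx_pos : 0 < f x := (by positivity : 0 < C₁ / (c * (1 + x))).trans_le hfx
  have hfy_pos : 0 < C₁ / (c * (1 + y)) := by positivity
  calc |f x / f y| = f x / f y := abs_of_pos (div_pos hfx_pos (hfy_pos.trans_le hfy))
    _ ≤ C₂ / (c * (1 + x)) / (C₁ / (c * (1 + y))) :=
      div_le_div₀ (hfx_pos.le.trans hfx') hfx' hfy_pos hfy
    _ = C₂ / C₁ * ((1 + y) / (1 + x)) := by field_simp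

theorem one_add_mul_div_one_add_mul_le {k s T : ℝ} (hk : 1 ≤ k) (hs : 0 < s) (hT : 0 ≤ T) :
    (1 + k * T) / (1 + k * s) ≤ (1 + T) / s := by
  rw [div_le_div_iff₀ (by positivity) hs]
  nlinarith [mul_le_mul_of_nonneg_right hk hs.le, mul_nonneg hT hs.le]

theorem noisy_data_stability_general
    {H : Type*} [NormedAddCommGroup H] [InnerProductSpace ℝ H] [CompleteSpace H]
    (φ : HilbertBasis ℕ ℝ H)
    (α t τ C₁ C₂ δ : ℝ) (hα1 : α < 1)
    (ht : 0 < t) (htτ : t < τ) (hC₁ : 0 < C₁) (hC₁₂ : C₁ ≤ C₂)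
    (hbd : ∀ x : ℝ, 0 < x →
      C₁ / (Real.Gamma (1 - α) * (1 + x)) ≤ mittagLeffler α (-x) ∧
      mittagLeffler α (-x) ≤ C₂ / (Real.Gamma (1 - α) * (1 + x)))
    (g g' u u' : H) (hnoise : ‖g - g'‖ ≤ δ)
    (hu : u = ∑' n : ℕ,
      (mittagLeffler α (-((n + 1 : ℝ) ^ 2 * t ^ α)) /
        mittagLeffler α (-((n + 1 : ℝ) ^ 2 * τ ^ α)) * ⟪g, φ n⟫) • φ n)
    (hu' : u' = ∑' n : ℕ,
      (mittagLeffler α (-((n + 1 : ℝ) ^ 2 * t ^ α)) /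
        mittagLeffler α (-((n + 1 : ℝ) ^ 2 * τ ^ α)) * ⟪g', φ n⟫) • φ n) :
    ‖u - u'‖ ≤ (C₂ / C₁) * ((1 + τ ^ α) / t ^ α) * δ := by
  have hΓ : 0 < Real.Gamma (1 - α) := Real.Gamma_pos_of_pos (by linarith)
  have htα : 0 < t ^ α := Real.rpow_pos_of_pos ht α
  have hτα : 0 < τ ^ α := Real.rpow_pos_of_pos (ht.trans htτ) α
  set M := C₂ / C₁ * ((1 + τ ^ α) / t ^ α)
  have hC₂ : 0 < C₂ := hC₁.trans_le hC₁₂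
  have hM : 0 ≤ M := by positivity
  set m : ℕ → ℝ := fun n => mittagLeffler α (-((n + 1 : ℝ) ^ 2 * t ^ α)) /
    mittagLeffler α (-((n + 1 : ℝ) ^ 2 * τ ^ α))
  have hm : ∀ n, ‖m n‖ ≤ M := fun n => by
    have hk : (1 : ℝ) ≤ (n + 1) ^ 2 := one_le_pow₀ (by linarith [n.cast_nonneg (α := ℝ)])
    exact (abs_div_le_of_two_sided_bound (f := fun x => mittagLeffler α (-x)) hΓ hC₁ hbd
      (by positivity) (by positivity)).trans
      (mul_le_mul_of_nonneg_left (one_add_mul_div_one_add_mul_le hk htα hτα.le) (by positivity))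
  have hdiff : u - u' = ∑' n, (m n * ⟪φ n, g - g'⟫) • φ n := by
    simp_rw [hu, hu', real_inner_comm _ g, real_inner_comm _ g']
    rw [← (φ.hasSum_mul_inner_smul hm g).summable.tsum_sub
      (φ.hasSum_mul_inner_smul hm g').summable]
    simp_rw [inner_sub_right, mul_sub, sub_smul]
  calc ‖u - u'‖ ≤ M * ‖g - g'‖ := hdiff ▸ φ.norm_tsum_mul_inner_smul_le hm hM _
    _ ≤ M * δ := mul_le_mul_of_nonneg_left hnoise hM

/-- stability estimate, Theorem 5.1: with
`u = R_{t,α} g` and `ũ = R_{t,α} g̃` given by the regularization formula and `‖g − g̃‖ ≤ δ`,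
one has `‖u − ũ‖ ≤ (C₂/C₁)((1+τ^α)/t^α) δ` for `0 < t < τ`. -/
theorem noisy_data_stability
    {H : Type*} [NormedAddCommGroup H] [InnerProductSpace ℝ H] [CompleteSpace H]
    (φ : HilbertBasis ℕ ℝ H)
    (α t τ C₁ C₂ δ : ℝ) (hα : 0 < α) (hα1 : α < 1)
    (ht : 0 < t) (htτ : t < τ) (hC₁ : 0 < C₁) (hC₁₂ : C₁ ≤ C₂) (hδ : 0 < δ)
    (hbd : ∀ x : ℝ, 0 < x →
      C₁ / (Real.Gamma (1 - α) * (1 + x)) ≤ mittagLeffler α (-x) ∧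
      mittagLeffler α (-x) ≤ C₂ / (Real.Gamma (1 - α) * (1 + x)))
    (g g' u u' : H) (hnoise : ‖g - g'‖ ≤ δ)
    (hu : u = ∑' n : ℕ,
      (mittagLeffler α (-((n + 1 : ℝ) ^ 2 * t ^ α)) /
        mittagLeffler α (-((n + 1 : ℝ) ^ 2 * τ ^ α)) * ⟪g, φ n⟫) • φ n)
    (hu' : u' = ∑' n : ℕ,
      (mittagLeffler α (-((n + 1 : ℝ) ^ 2 * t ^ α)) /
        mittagLeffler α (-((n + 1 : ℝ) ^ 2 * τ ^ α)) * ⟪g', φ n⟫) • φ n) :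
    ‖u - u'‖ ≤ (C₂ / C₁) * ((1 + τ ^ α) / t ^ α) * δ :=
  noisy_data_stability_general φ α t τ C₁ C₂ δ hα1 ht htτ hC₁ hC₁₂ hbd g g' u u' hnoise hu hu'
end

section
/- Stability plus convergence estimate: under the hypotheses of the previous statements, for exact data g with initial value u_α(·,0) = f₀ and noisy data g̃ with ‖g−g̃‖ ≤ δ, one has ‖f₀ − R_{t,α} g̃‖ ≤ ‖f₀ − u_α(·,t)‖ + (C₂(1+τ^α)/C₁)(δ/t^α), where the first term tends to 0 as t → 0. -/
open scoped RealInnerProductSpace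

/-! `R_{t,α}` acts diagonally in the Hilbert basis `φ`, with symbol
`E_α(-λ²t^α) / E_α(-λ²τ^α)`. The two-sided bound `E_α(-x) ≍ 1/(1+x)` bounds this symbol by
`C₂(1+τ^α)/(C₁ t^α)` uniformly in `λ ≥ 1`, which bounds the propagated noise `‖R_{t,α}(g - g̃)‖`;
the triangle inequality does the rest. Since `⟪g, φₙ⟫ = E_α(-λₙ²τ^α)⟪f₀, φₙ⟫`, `u(t)` is the
multiplier with symbol `E_α(-λₙ²t^α)` applied to `f₀`; this symbol stays within `C` of `1` and
tends to `1` as `t → 0`, so dominated convergence in Parseval's identity gives `u(t) → f₀`. -/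

open Filter Topology

theorem mul_sq_le_of_abs_le {a M : ℝ} (h : |a| ≤ M) (c : ℝ) : (a * c) ^ 2 ≤ M ^ 2 * c ^ 2 := by
  rw [mul_pow]
  exact mul_le_mul_of_nonneg_right (sq_le_sq.2 (h.trans (le_abs_self M))) (sq_nonneg c)

namespace HilbertBasis

variable {ι H : Type*} [NormedAddCommGroup H] [InnerProductSpace ℝ H] (b : HilbertBasis ι ℝ H)

theorem hasSum_inner_smul (x : H) : HasSum (fun i => ⟪x, b i⟫ • b i) x := by
  simpa only [b.repr_apply_apply, real_inner_comm] using b.hasSum_repr x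

variable {b}

theorem inner_eq_of_hasSum {c : ι → ℝ} {y : H} (hy : HasSum (fun i => c i • b i) y) (j : ι) :
    ⟪y, b j⟫ = c j := by
  classical
  have hj : HasSum (fun i => if i = j then c j else 0) ⟪b j, y⟫ := by
    refine (hy.mapL (innerSL ℝ (b j))).congr_fun fun i => ?_
    rw [innerSL_apply_apply, real_inner_smul_right, orthonormal_iff_ite.1 b.orthonormal j i]
    by_cases hij : i = j
    · simp [hij]
    · simp [hij, Ne.symm hij]
  rw [real_inner_comm, hj.unique (hasSum_ite_eq j (c j))]

theorem hasSum_sq_of_hasSum {c : ι → ℝ} {y : H} (hy : HasSum (fun i => c i • b i) y) :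
    HasSum (fun i => c i ^ 2) (‖y‖ ^ 2) := by
  have hparseval := b.hasSum_inner_mul_inner y y
  rw [real_inner_self_eq_norm_sq] at hparseval
  refine hparseval.congr_fun fun i => ?_
  rw [real_inner_comm y (b i), inner_eq_of_hasSum hy, sq]

variable (b)

theorem summable_smul_of_summable_sq {c : ι → ℝ} (hc : Summable fun i => c i ^ 2) :
    Summable fun i => c i • b i := by
  have hmem : Memℓp c 2 := memℓp_gen (by simpa [Real.rpow_two] using hc)
  exact (b.hasSum_repr_symm ⟨c, hmem⟩).summable

noncomputable def multiplier (q : ι → ℝ) (x : H) : H :=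
  ∑' i, (q i * ⟪x, b i⟫) • b i

variable {b} {q : ι → ℝ} {M : ℝ}

theorem summable_sq_mul_inner (hq : ∀ i, |q i| ≤ M) (x : H) :
    Summable fun i => (q i * ⟪x, b i⟫) ^ 2 := by
  refine ((b.hasSum_sq_of_hasSum (b.hasSum_inner_smul x)).summable.mul_left (M ^ 2)).of_nonneg_of_le
    (fun i => sq_nonneg _) fun i => ?_
  exact mul_sq_le_of_abs_le (hq i) _

theorem hasSum_multiplier (hq : ∀ i, |q i| ≤ M) (x : H) :
    HasSum (fun i => (q i * ⟪x, b i⟫) • b i) (b.multiplier q x) :=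
  (b.summable_smul_of_summable_sq (summable_sq_mul_inner hq x)).hasSum

theorem multiplier_sub (hq : ∀ i, |q i| ≤ M) (x y : H) :
    b.multiplier q x - b.multiplier q y = b.multiplier q (x - y) := by
  refine ((hasSum_multiplier hq x).sub (hasSum_multiplier hq y)).unique ?_
  simpa only [inner_sub_left, mul_sub, sub_smul] using hasSum_multiplier hq (x - y)

theorem norm_multiplier_le (hq : ∀ i, |q i| ≤ M) (hM : 0 ≤ M) (x : H) :
    ‖b.multiplier q x‖ ≤ M * ‖x‖ := by
  have hsq : ‖b.multiplier q x‖ ^ 2 ≤ (M * ‖x‖) ^ 2 := by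
    rw [mul_pow]
    refine hasSum_le (fun i => ?_) (hasSum_sq_of_hasSum (hasSum_multiplier hq x))
      ((hasSum_sq_of_hasSum (b.hasSum_inner_smul x)).mul_left (M ^ 2))
    exact mul_sq_le_of_abs_le (hq i) _
  exact le_of_sq_le_sq hsq (by positivity)

theorem norm_sub_multiplier_le_add (hq : ∀ i, |q i| ≤ M) (hM : 0 ≤ M) {x y : H} {δ : ℝ}
    (hxy : ‖x - y‖ ≤ δ) (f : H) :
    ‖f - b.multiplier q y‖ ≤ ‖f - b.multiplier q x‖ + M * δ :=
  calc ‖f - b.multiplier q y‖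
      ≤ ‖f - b.multiplier q x‖ + ‖b.multiplier q x - b.multiplier q y‖ :=
        norm_sub_le_norm_sub_add_norm_sub _ _ _
    _ ≤ ‖f - b.multiplier q x‖ + M * δ := by
        rw [multiplier_sub hq]
        gcongr
        exact (norm_multiplier_le hq hM _).trans (by gcongr)

theorem tendsto_multiplier {α : Type*} {l : Filter α} {q : α → ι → ℝ}
    (hq : ∀ᶠ s in l, ∀ i, |q s i - 1| ≤ M) (hlim : ∀ i, Tendsto (q · i) l (𝓝 1)) (x : H) :
    Tendsto (fun s => b.multiplier (q s) x) l (𝓝 x) := by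
  rw [tendsto_iff_norm_sub_tendsto_zero]
  have hnorm : ∀ᶠ s in l,
      HasSum (fun i => ((q s i - 1) * ⟪x, b i⟫) ^ 2) (‖b.multiplier (q s) x - x‖ ^ 2) := by
    filter_upwards [hq] with s hs
    have hbdd : ∀ i, |q s i| ≤ M + 1 := fun i => by
      simpa using (abs_add_le (q s i - 1) 1).trans (add_le_add (hs i) (abs_one).le)
    have hdiff : HasSum (fun i => ((q s i - 1) * ⟪x, b i⟫) • b i) (b.multiplier (q s) x - x) :=
      ((hasSum_multiplier hbdd x).sub (b.hasSum_inner_smul x)).congr_fun fun i => by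
        rw [← sub_smul, sub_one_mul]
    exact hasSum_sq_of_hasSum hdiff
  have hsum : Tendsto (fun s => ∑' i, ((q s i - 1) * ⟪x, b i⟫) ^ 2) l (𝓝 0) := by
    have hdom := tendsto_tsum_of_dominated_convergence
      (f := fun s i => ((q s i - 1) * ⟪x, b i⟫) ^ 2)
      (g := fun _ => 0) ((hasSum_sq_of_hasSum (b.hasSum_inner_smul x)).summable.mul_left (M ^ 2))
      (fun i => by simpa using (((hlim i).sub_const 1).mul_const ⟪x, b i⟫).pow 2) ?_
    · simpa using hdom
    filter_upwards [hq] with s hs i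
    rw [Real.norm_eq_abs, abs_of_nonneg (sq_nonneg _)]
    exact mul_sq_le_of_abs_le (hs i) _
  have hsqrt : Tendsto (fun s => √(∑' i, ((q s i - 1) * ⟪x, b i⟫) ^ 2)) l (𝓝 0) := by
    simpa using hsum.sqrt
  refine hsqrt.congr' ?_
  filter_upwards [hnorm] with s hs
  rw [hs.tsum_eq, Real.sqrt_sq (norm_nonneg _)]

end HilbertBasis

theorem one_add_mul_div_one_add_mul_le_s15 {L r s : ℝ} (hL : 1 ≤ L) (hr : 0 ≤ r) (hs : 0 < s) :
    (1 + L * r) / (1 + L * s) ≤ (1 + r) / s := by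
  rw [div_le_div_iff₀ (by positivity) hs]
  nlinarith [mul_nonneg hr hs.le]

section TwoSidedBound

variable {E : ℝ → ℝ} {G C₁ C₂ : ℝ}

theorem pos_of_div_one_add_le (hG : 0 < G) (hC₁ : 0 < C₁)
    (hlow : ∀ x : ℝ, 0 < x → C₁ / (G * (1 + x)) ≤ E (-x)) {x : ℝ} (hx : 0 < x) : 0 < E (-x) :=
  lt_of_lt_of_le (by positivity) (hlow x hx)

theorem div_le_of_two_sided_bound (hG : 0 < G) (hC₁ : 0 < C₁) (hC₂ : 0 ≤ C₂)
    (hbd : ∀ x : ℝ, 0 < x → C₁ / (G * (1 + x)) ≤ E (-x) ∧ E (-x) ≤ C₂ / (G * (1 + x)))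
    {L s r : ℝ} (hL : 1 ≤ L) (hs : 0 < s) (hr : 0 < r) :
    E (-(L * s)) / E (-(L * r)) ≤ C₂ * (1 + r) / C₁ / s := by
  have hLs : 0 < L * s := by positivity
  have hLr : 0 < L * r := by positivity
  calc E (-(L * s)) / E (-(L * r))
      ≤ C₂ / (G * (1 + L * s)) / (C₁ / (G * (1 + L * r))) :=
        div_le_div₀ (by positivity) (hbd _ hLs).2 (by positivity) (hbd _ hLr).1
    _ = C₂ / C₁ * ((1 + L * r) / (1 + L * s)) := by field_simp
    _ ≤ C₂ / C₁ * ((1 + r) / s) :=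
        mul_le_mul_of_nonneg_left (one_add_mul_div_one_add_mul_le_s15 hL hr.le hs) (by positivity)
    _ = C₂ * (1 + r) / C₁ / s := by ring

end TwoSidedBound

theorem stability_plus_convergence_general
    {H : Type*} [NormedAddCommGroup H] [InnerProductSpace ℝ H]
    (φ : HilbertBasis ℕ ℝ H)
    (α τ C C₁ C₂ δ : ℝ) (hα1 : α < 1) (hτ : 0 < τ)
    (hC₁ : 0 < C₁) (hC₁₂ : C₁ ≤ C₂)
    (hbd : ∀ x : ℝ, 0 < x →
      C₁ / (Real.Gamma (1 - α) * (1 + x)) ≤ mittagLeffler α (-x) ∧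
      mittagLeffler α (-x) ≤ C₂ / (Real.Gamma (1 - α) * (1 + x)))
    (hbd1 : ∀ l t : ℝ, 0 < l → 0 < t → |mittagLeffler α (-(l ^ 2 * t ^ α)) - 1| ≤ C)
    (hlim : ∀ l : ℝ, 0 < l →
      Filter.Tendsto (fun t : ℝ => mittagLeffler α (-(l ^ 2 * t ^ α)))
        (nhdsWithin 0 (Set.Ioi 0)) (nhds 1))
    (f₀ g g' : H)
    (hf₀ : ∀ n : ℕ, ⟪g, φ n⟫ = mittagLeffler α (-((n + 1 : ℝ) ^ 2 * τ ^ α)) * ⟪f₀, φ n⟫)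
    (hnoise : ‖g - g'‖ ≤ δ)
    (u u' : ℝ → H)
    (hu : ∀ t : ℝ, 0 < t → t < τ → u t = ∑' n : ℕ,
      (mittagLeffler α (-((n + 1 : ℝ) ^ 2 * t ^ α)) /
        mittagLeffler α (-((n + 1 : ℝ) ^ 2 * τ ^ α)) * ⟪g, φ n⟫) • φ n)
    (hu' : ∀ t : ℝ, 0 < t → t < τ → u' t = ∑' n : ℕ,
      (mittagLeffler α (-((n + 1 : ℝ) ^ 2 * t ^ α)) /
        mittagLeffler α (-((n + 1 : ℝ) ^ 2 * τ ^ α)) * ⟪g', φ n⟫) • φ n) :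
    (∀ t : ℝ, 0 < t → t < τ →
      ‖f₀ - u' t‖ ≤ ‖f₀ - u t‖ + (C₂ * (1 + τ ^ α) / C₁) * (δ / t ^ α)) ∧
    Filter.Tendsto (fun t : ℝ => ‖f₀ - u t‖) (nhdsWithin 0 (Set.Ioi 0)) (nhds 0) := by
  have hG : 0 < Real.Gamma (1 - α) := Real.Gamma_pos_of_pos (by linarith)
  have hC₂ : 0 < C₂ := hC₁.trans_le hC₁₂
  set m : ℝ → ℕ → ℝ := fun s n => mittagLeffler α (-((n + 1 : ℝ) ^ 2 * s ^ α))
  have hm_pos : ∀ s, 0 < s → ∀ n, 0 < m s n := fun s hs n =>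
    pos_of_div_one_add_le hG hC₁ (fun x hx => (hbd x hx).1) (by positivity)
  have hsymbol : ∀ t, 0 < t → ∀ n, |m t n / m τ n| ≤ C₂ * (1 + τ ^ α) / C₁ / t ^ α := by
    intro t ht n
    rw [abs_of_pos (div_pos (hm_pos t ht n) (hm_pos τ hτ n))]
    exact div_le_of_two_sided_bound hG hC₁ hC₂.le hbd
      (one_le_pow₀ (le_add_of_nonneg_left n.cast_nonneg)) (by positivity) (by positivity)
  have hu_R : ∀ t, 0 < t → t < τ → u t = φ.multiplier (fun n => m t n / m τ n) g := hu
  have hu'_R : ∀ t, 0 < t → t < τ → u' t = φ.multiplier (fun n => m t n / m τ n) g' := hu'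
  have hu_f₀ : ∀ t, 0 < t → t < τ → u t = φ.multiplier (m t) f₀ := fun t ht htτ => by
    rw [hu t ht htτ]
    refine tsum_congr fun n => ?_
    rw [hf₀ n, ← mul_assoc, div_mul_cancel₀ _ (hm_pos τ hτ n).ne']
  refine ⟨fun t ht htτ => ?_, ?_⟩
  · rw [hu_R t ht htτ, hu'_R t ht htτ]
    exact (HilbertBasis.norm_sub_multiplier_le_add (hsymbol t ht) (by positivity) hnoise
      f₀).trans_eq (by rw [div_mul_eq_mul_div, mul_div_assoc])
  · have hbdd : ∀ᶠ t in 𝓝[>] (0 : ℝ), ∀ n, |m t n - 1| ≤ C :=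
      eventually_mem_nhdsWithin.mono fun t ht n => hbd1 _ t (by positivity) ht
    have hconv : Tendsto (fun t => φ.multiplier (m t) f₀) (𝓝[>] 0) (𝓝 f₀) :=
      HilbertBasis.tendsto_multiplier hbdd (fun n => hlim _ (by positivity)) f₀
    refine (tendsto_iff_norm_sub_tendsto_zero.1 hconv).congr' ?_
    filter_upwards [Ioo_mem_nhdsGT hτ] with t ht
    rw [norm_sub_rev, hu_f₀ t ht.1 ht.2]

/-- Theorem 5.2: for exact data `g` with initial value `f₀`
(`⟨g,φ_n⟩ = E_α(−λ_n²τ^α)⟨f₀,φ_n⟩`, `λ_n = n+1`) and noisy data `g̃` with `‖g − g̃‖ ≤ δ`,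
the regularized solutions `u(t) = R_{t,α} g`, `ũ(t) = R_{t,α} g̃` satisfy, for `0 < t < τ`,
`‖f₀ − ũ(t)‖ ≤ ‖f₀ − u(t)‖ + (C₂(1+τ^α)/C₁)(δ/t^α)`, and `‖f₀ − u(t)‖ → 0` as `t → 0⁺`. -/
theorem stability_plus_convergence
    {H : Type*} [NormedAddCommGroup H] [InnerProductSpace ℝ H] [CompleteSpace H]
    (φ : HilbertBasis ℕ ℝ H)
    (α τ C C₁ C₂ δ : ℝ) (hα : 0 < α) (hα1 : α < 1) (hτ : 0 < τ)
    (hC : 0 < C) (hC₁ : 0 < C₁) (hC₁₂ : C₁ ≤ C₂) (hδ : 0 < δ)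
    (hbd : ∀ x : ℝ, 0 < x →
      C₁ / (Real.Gamma (1 - α) * (1 + x)) ≤ mittagLeffler α (-x) ∧
      mittagLeffler α (-x) ≤ C₂ / (Real.Gamma (1 - α) * (1 + x)))
    (hbd1 : ∀ l t : ℝ, 0 < l → 0 < t → |mittagLeffler α (-(l ^ 2 * t ^ α)) - 1| ≤ C)
    (hlim : ∀ l : ℝ, 0 < l →
      Filter.Tendsto (fun t : ℝ => mittagLeffler α (-(l ^ 2 * t ^ α)))
        (nhdsWithin 0 (Set.Ioi 0)) (nhds 1))
    (f₀ g g' : H)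
    (hf₀ : ∀ n : ℕ, ⟪g, φ n⟫ = mittagLeffler α (-((n + 1 : ℝ) ^ 2 * τ ^ α)) * ⟪f₀, φ n⟫)
    (hnoise : ‖g - g'‖ ≤ δ)
    (u u' : ℝ → H)
    (hu : ∀ t : ℝ, 0 < t → t < τ → u t = ∑' n : ℕ,
      (mittagLeffler α (-((n + 1 : ℝ) ^ 2 * t ^ α)) /
        mittagLeffler α (-((n + 1 : ℝ) ^ 2 * τ ^ α)) * ⟪g, φ n⟫) • φ n)
    (hu' : ∀ t : ℝ, 0 < t → t < τ → u' t = ∑' n : ℕ,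
      (mittagLeffler α (-((n + 1 : ℝ) ^ 2 * t ^ α)) /
        mittagLeffler α (-((n + 1 : ℝ) ^ 2 * τ ^ α)) * ⟪g', φ n⟫) • φ n) :
    (∀ t : ℝ, 0 < t → t < τ →
      ‖f₀ - u' t‖ ≤ ‖f₀ - u t‖ + (C₂ * (1 + τ ^ α) / C₁) * (δ / t ^ α)) ∧
    Filter.Tendsto (fun t : ℝ => ‖f₀ - u t‖) (nhdsWithin 0 (Set.Ioi 0)) (nhds 0) :=
  stability_plus_convergence_general φ α τ C C₁ C₂ δ hα1 hτ hC₁ hC₁₂ hbd hbd1 hlim f₀ g g' hf₀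
    hnoise u u' hu hu'
end
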